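/- Let m ≤ n and let nonnegative reals J_{m−1}, (I_i)_{m≤i≤n}, (ω_i)_{m≤i≤n} be given. Compute (Ĩ_k, J_k, ω̃_k) for m ≤ k ≤ n by the recursion Ĩ_k = ω_k + (I_k − J_{k−1})^+, J_k = ω_k + (J_{k−1} − I_k)^+, ω̃_k = I_k ∧ J_{k−1}. Define T = max_{m≤j≤n} ( Σ_{i=m}^j I_i + Σ_{i=j}^n ω_i ) and T̃ = max_{m≤j≤n} ( Σ_{i=m}^j ω̃_i + Σ_{i=j}^n Ĩ_i ). Then T = T̃. -/

import Mathlib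

/-!
Write `S_N = Σ_{m ≤ i ≤ N} I_i`, `B_N = J_{m-1} + Σ_{m ≤ i ≤ N} ω_i`, and `T_N`, `T̃_N` for the two
maxima taken over `[m, N]` instead of `[m, n]`. Splitting off the last index gives
`T_{N+1} = ω_{N+1} + max S_{N+1} T_N`, and likewise for `T̃`. The queue recursion yields
`ω̃_k + J_k = J_{k-1} + ω_k`, so `Σ ω̃` telescopes to `B_N - J_N`, and
`J_k + I_k = ω_k + max J_{k-1} I_k`, so the departure time `S_N + J_N` equals `max T_N B_N`.
Together with the conservation law `Ĩ_k + ω̃_k = I_k + ω_k`, these turn the recursion for `T̃`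
into the one for `T`, and `T_N = T̃_N` follows by induction on `N`.
-/

open Finset

lemma sum_Icc_add_one_right {M : Type*} [AddCommMonoid M] (f : ℤ → M) {a b : ℤ}
    (h : a ≤ b + 1) : ∑ i ∈ Icc a (b + 1), f i = ∑ i ∈ Icc a b, f i + f (b + 1) := by
  rw [← insert_Icc_right_eq_Icc_add_one h, sum_insert (by simp), add_comm]

section LinearOrderedAddCommGroup

variable {G : Type*} [AddCommGroup G] [LinearOrder G] [IsOrderedAddMonoid G]

lemma min_add_max_sub_zero (a b : G) : min a b + max (b - a) 0 = b := by
  rw [min_comm, inf_eq_sub_posPart_sub]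
  exact sub_add_cancel b (b - a)⁺

lemma max_sub_zero_add (a b : G) : max (a - b) 0 + b = max a b := by
  rw [max_add, sub_add_cancel, zero_add]

lemma max_sub_add_max_sub_zero_add {T B S a b : G} (h : max T B = S + b) :
    max (a - b + B) (max (a - b) 0 + T) = max (S + a) T :=
  calc max (a - b + B) (max (a - b) 0 + T)
      = max (a - b + max B T) T := by
        rw [max_add, zero_add, ← max_assoc, max_add_add_left]
    _ = max (S + a) T := by rw [max_comm B, h, sub_add_add_cancel, add_comm]

/-- Last-passage time through the two-row array `f, g` on `[m, N]`, switching rows at `j`. -/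
noncomputable def lastPassage (f g : ℤ → G) (m N : ℤ) (h : m ≤ N) : G :=
  (Icc m N).sup' (nonempty_Icc.mpr h) fun j => (∑ i ∈ Icc m j, f i) + ∑ i ∈ Icc j N, g i

omit [IsOrderedAddMonoid G] in
lemma lastPassage_self (f g : ℤ → G) (m : ℤ) : lastPassage f g m m le_rfl = f m + g m := by
  simp [lastPassage]

lemma lastPassage_add_one (f g : ℤ → G) {m N : ℤ} (h : m ≤ N) (h' : m ≤ N + 1) :
    lastPassage f g m (N + 1) h' =
      g (N + 1) + max (∑ i ∈ Icc m (N + 1), f i) (lastPassage f g m N h) := by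
  have hsplit : ∀ j ∈ Icc m N, (∑ i ∈ Icc m j, f i) + ∑ i ∈ Icc j (N + 1), g i
      = g (N + 1) + ((∑ i ∈ Icc m j, f i) + ∑ i ∈ Icc j N, g i) := by
    intro j hj
    rw [sum_Icc_add_one_right g (by grind)]
    abel
  simp only [lastPassage]
  rw [sup'_congr _ (insert_Icc_right_eq_Icc_add_one h').symm fun _ _ => rfl,
    sup'_insert (H := nonempty_Icc.mpr h), sup'_congr _ rfl hsplit, ← add_sup', Icc_self,
    sum_singleton, add_comm _ (g (N + 1)), ← add_max]

section Queue

variable {m n : ℤ} {I ω Itil J ωtil : ℤ → G}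

lemma sum_ωtil_add_J (hJ : ∀ k, m ≤ k → k ≤ n → J k = ω k + max (J (k - 1) - I k) 0)
    (hωtil : ∀ k, m ≤ k → k ≤ n → ωtil k = min (I k) (J (k - 1))) (N : ℤ) (hmN : m - 1 ≤ N)
    (hNn : N ≤ n) : ∑ i ∈ Icc m N, ωtil i + J N = J (m - 1) + ∑ i ∈ Icc m N, ω i := by
  induction N, hmN using Int.leInduction with
  | base => simp
  | succ N hmN ih =>
    have hstep : ωtil (N + 1) + J (N + 1) = J N + ω (N + 1) := by
      rw [hωtil _ (by omega) hNn, hJ _ (by omega) hNn, add_sub_cancel_right, add_left_comm,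
        min_add_max_sub_zero, add_comm]
    rw [sum_Icc_add_one_right _ (by omega), sum_Icc_add_one_right _ (by omega), add_assoc,
      hstep, ← add_assoc, ih (by omega), add_assoc]

lemma sum_I_add_J (hJ : ∀ k, m ≤ k → k ≤ n → J k = ω k + max (J (k - 1) - I k) 0)
    (N : ℤ) (hmN : m ≤ N) (hNn : N ≤ n) :
    ∑ i ∈ Icc m N, I i + J N = max (lastPassage I ω m N hmN) (J (m - 1) + ∑ i ∈ Icc m N, ω i) := by
  have hJI : ∀ k, m ≤ k → k ≤ n → J k + I k = ω k + max (J (k - 1)) (I k) := fun k hmk hkn => by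
    rw [hJ k hmk hkn, add_assoc, max_sub_zero_add]
  induction N, hmN using Int.leInduction with
  | base =>
    rw [lastPassage_self, Icc_self, sum_singleton, sum_singleton, add_comm, hJI m le_rfl hNn,
      add_max, max_comm]
    abel_nf
  | succ N hmN ih =>
    calc ∑ i ∈ Icc m (N + 1), I i + J (N + 1)
        = ∑ i ∈ Icc m N, I i + (J (N + 1) + I (N + 1)) := by
          rw [sum_Icc_add_one_right _ (by omega)]; abel
      _ = ω (N + 1) + max (∑ i ∈ Icc m N, I i + J N) (∑ i ∈ Icc m (N + 1), I i) := by
          rw [hJI _ (by omega) hNn, add_sub_cancel_right, add_left_comm, add_max,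
            sum_Icc_add_one_right _ (by omega)]
      _ = max (lastPassage I ω m (N + 1) (by omega)) (J (m - 1) + ∑ i ∈ Icc m (N + 1), ω i) := by
          rw [ih (by omega), lastPassage_add_one _ _ hmN, sum_Icc_add_one_right ω (by omega),
            max_comm (max _ _), ← max_assoc, add_max]
          congr 1; abel

lemma lastPassage_eq_lastPassage
    (hItil : ∀ k, m ≤ k → k ≤ n → Itil k = ω k + max (I k - J (k - 1)) 0)
    (hJ : ∀ k, m ≤ k → k ≤ n → J k = ω k + max (J (k - 1) - I k) 0)
    (hωtil : ∀ k, m ≤ k → k ≤ n → ωtil k = min (I k) (J (k - 1)))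
    (N : ℤ) (hmN : m ≤ N) (hNn : N ≤ n) :
    lastPassage I ω m N hmN = lastPassage ωtil Itil m N hmN := by
  have hconserve : ∀ k, m ≤ k → k ≤ n → Itil k + ωtil k = I k + ω k := fun k hmk hkn => by
    rw [hItil k hmk hkn, hωtil k hmk hkn, min_comm, add_assoc, add_comm _ (min _ _),
      min_add_max_sub_zero, add_comm]
  induction N, hmN using Int.leInduction with
  | base => rw [lastPassage_self, lastPassage_self, ← hconserve m le_rfl hNn, add_comm]
  | succ N hmN ih =>
    have hωtil_sum : ∑ i ∈ Icc m N, ωtil i = J (m - 1) + ∑ i ∈ Icc m N, ω i - J N :=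
      eq_sub_of_add_eq (sum_ωtil_add_J hJ hωtil N (by omega) (by omega))
    set T := lastPassage I ω m N hmN
    calc lastPassage I ω m (N + 1) _
        = ω (N + 1) + max (∑ i ∈ Icc m N, I i + I (N + 1)) T := by
          rw [lastPassage_add_one _ _ hmN, sum_Icc_add_one_right _ (by omega)]
      _ = ω (N + 1) + max (I (N + 1) - J N + (J (m - 1) + ∑ i ∈ Icc m N, ω i))
            (max (I (N + 1) - J N) 0 + T) := by
          rw [max_sub_add_max_sub_zero_add (sum_I_add_J hJ N hmN (by omega)).symm]
      _ = max (I (N + 1) + ω (N + 1) + ∑ i ∈ Icc m N, ωtil i) (Itil (N + 1) + T) := by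
          rw [add_max, hItil _ (by omega) hNn, add_sub_cancel_right, hωtil_sum]
          congr 1 <;> abel
      _ = lastPassage ωtil Itil m (N + 1) _ := by
          rw [lastPassage_add_one _ _ hmN, ← ih (by omega), add_max,
            sum_Icc_add_one_right _ (by omega), ← hconserve _ (by omega) hNn]
          congr 1
          abel

end Queue

end LinearOrderedAddCommGroup

theorem queue_T_duality_general (m n : ℤ) (hmn : m ≤ n) (I ω Itil J ωtil : ℤ → ℝ)
    (hItil : ∀ k, m ≤ k → k ≤ n → Itil k = ω k + max (I k - J (k - 1)) 0)
    (hJ : ∀ k, m ≤ k → k ≤ n → J k = ω k + max (J (k - 1) - I k) 0)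
    (hωtil : ∀ k, m ≤ k → k ≤ n → ωtil k = min (I k) (J (k - 1))) :
    Finset.sup' (Finset.Icc m n) (Finset.nonempty_Icc.mpr hmn)
      (fun j => (∑ i ∈ Finset.Icc m j, I i) + ∑ i ∈ Finset.Icc j n, ω i)
    = Finset.sup' (Finset.Icc m n) (Finset.nonempty_Icc.mpr hmn)
      (fun j => (∑ i ∈ Finset.Icc m j, ωtil i) + ∑ i ∈ Finset.Icc j n, Itil i) := by
  exact lastPassage_eq_lastPassage hItil hJ hωtil n hmn le_rfl

/-- Duality for the queueing recursion:
`T = max_{m≤j≤n} (Σ_{i=m}^j I_i + Σ_{i=j}^n ω_i)` equals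
`T̃ = max_{m≤j≤n} (Σ_{i=m}^j ω̃_i + Σ_{i=j}^n Ĩ_i)`. -/
theorem queue_T_duality (m n : ℤ) (hmn : m ≤ n) (I ω Itil J ωtil : ℤ → ℝ)
    (hInn : ∀ i, 0 ≤ I i) (hωnn : ∀ i, 0 ≤ ω i) (hJinit : 0 ≤ J (m - 1))
    (hItil : ∀ k, m ≤ k → k ≤ n → Itil k = ω k + max (I k - J (k - 1)) 0)
    (hJ : ∀ k, m ≤ k → k ≤ n → J k = ω k + max (J (k - 1) - I k) 0)
    (hωtil : ∀ k, m ≤ k → k ≤ n → ωtil k = min (I k) (J (k - 1))) :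
    Finset.sup' (Finset.Icc m n) (Finset.nonempty_Icc.mpr hmn)
      (fun j => (∑ i ∈ Finset.Icc m j, I i) + ∑ i ∈ Finset.Icc j n, ω i)
    = Finset.sup' (Finset.Icc m n) (Finset.nonempty_Icc.mpr hmn)
      (fun j => (∑ i ∈ Finset.Icc m j, ωtil i) + ∑ i ∈ Finset.Icc j n, Itil i) :=
  queue_T_duality_general m n hmn I ω Itil J ωtil hItil hJ hωtil
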